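/- Consider the system on X = ℝ² given by A(n)(x₁,x₂) = (c a_n x₁, x₂/c) with c = 1/e, where a_n = e^{n(1+2^n)} if n is even and a_n = e^{−(n+1)(1+2^{n+1})} if n is odd, with projections P(n)(x₁,x₂) = (x₁,0). Then with α = 1 and the nondecreasing sequence N(n) = e^{(n+1)(1+2^{n+1})} one has e^{α(m−n)}(‖𝒜_P(m,n)x‖ + ‖Q(n)x‖) ≤ N(n)‖P(n)x‖ + N(m)‖𝒜_Q(m,n)x‖ for all m ≥ n and all x ∈ ℝ²; in particular the system is P-nonuniformly exponentially dichotomic. -/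
import Mathlib


open Real

/-- The evolution operator started at time `n`, after `k` steps:
`A(n+k) ⋯ A(n+1)`. -/
noncomputable def evolFrom {X : Type*} [NormedAddCommGroup X] [NormedSpace ℝ X]
    (A : ℕ → X →L[ℝ] X) (n : ℕ) : ℕ → X →L[ℝ] X
  | 0 => 1
  | k + 1 => (A (n + k + 1)).comp (evolFrom A n k)

/-- The evolution operator `𝒜(m,n) = A(m) ⋯ A(n+1)` for `m ≥ n`, `𝒜(n,n) = I`. -/
noncomputable def evol {X : Type*} [NormedAddCommGroup X] [NormedSpace ℝ X]
    (A : ℕ → X →L[ℝ] X) (m n : ℕ) : X →L[ℝ] X :=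
  evolFrom A n (m - n)

/-- `𝒜_P(m,n) = 𝒜(m,n) P(n)`. -/
noncomputable def evolP {X : Type*} [NormedAddCommGroup X] [NormedSpace ℝ X]
    (A P : ℕ → X →L[ℝ] X) (m n : ℕ) : X →L[ℝ] X :=
  (evol A m n).comp (P n)

/-- `𝒜_Q(m,n) = 𝒜(m,n) Q(n)` where `Q(n) = I - P(n)`. -/
noncomputable def evolQ {X : Type*} [NormedAddCommGroup X] [NormedSpace ℝ X]
    (A P : ℕ → X →L[ℝ] X) (m n : ℕ) : X →L[ℝ] X :=
  (evol A m n).comp (1 - P n)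

/-- The system is P-nonuniformly exponentially dichotomic. -/
def IsNED {X : Type*} [NormedAddCommGroup X] [NormedSpace ℝ X]
    (A P : ℕ → X →L[ℝ] X) : Prop :=
  ∃ α : ℝ, 0 < α ∧ ∃ N : ℕ → ℝ, (∀ n, 0 < N n) ∧ Monotone N ∧
    ∀ m n : ℕ, n ≤ m → ∀ x : X,
      exp (α * ((m : ℝ) - n)) * (‖evolP A P m n x‖ + ‖(1 - P n) x‖) ≤
        N n * ‖P n x‖ + N m * ‖evolQ A P m n x‖

/-- The diagonal operator `(x₁, x₂) ↦ (u x₁, v x₂)` on `ℝ²`. -/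
noncomputable def diagCLM (u v : ℝ) : ℝ × ℝ →L[ℝ] ℝ × ℝ :=
  (u • ContinuousLinearMap.fst ℝ ℝ ℝ).prod (v • ContinuousLinearMap.snd ℝ ℝ ℝ)

/-- The family of projections `P(n)(x₁, x₂) = (x₁, 0)` on `ℝ²`. -/
noncomputable def projFst : ℕ → (ℝ × ℝ →L[ℝ] ℝ × ℝ) :=
  fun _ => (ContinuousLinearMap.fst ℝ ℝ ℝ).prod 0

/-! ### Auxiliary material -/

/-- Telescoping exponent: `G(n) = 0` for even `n`, `-(n+1)(1+2^{n+1})` for odd `n`. -/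
noncomputable def Gaux (n : ℕ) : ℝ :=
  if Even n then 0 else -(((n : ℝ) + 1) * (1 + 2 ^ (n + 1)))

lemma Gaux_nonpos (n : ℕ) : Gaux n ≤ 0 := by
  unfold Gaux; split
  · exact le_refl 0
  · have : (0:ℝ) ≤ ((n : ℝ) + 1) * (1 + 2 ^ (n + 1)) := by positivity
    linarith

lemma neg_Gaux_le (n : ℕ) : -Gaux n ≤ ((n : ℝ) + 1) * (1 + 2 ^ (n + 1)) := by
  unfold Gaux; split
  · simp; positivity
  · simp

lemma a_succ (a : ℕ → ℝ)
    (ha : ∀ n, a n = if Even n then exp ((n : ℝ) * (1 + 2 ^ n))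
      else exp (-(((n : ℝ) + 1) * (1 + 2 ^ (n + 1))))) (j : ℕ) :
    a (j + 1) = exp (Gaux (j + 1) - Gaux j) := by
  rcases Nat.even_or_odd j with hj | hj
  · have hj1 : ¬ Even (j + 1) := by simp [Nat.even_add_one, hj]
    simp only [ha, Gaux, if_neg hj1, if_pos hj]
    congr 1; push_cast; ring
  · have hj1 : Even (j + 1) := hj.add_one
    have hj' : ¬ Even j := Nat.not_even_iff_odd.mpr hj
    simp only [ha, Gaux, if_pos hj1, if_neg hj']
    congr 1; push_cast; ring

lemma diagCLM_apply (u v : ℝ) (x : ℝ × ℝ) : diagCLM u v x = (u * x.1, v * x.2) := by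
  simp [diagCLM]

lemma evolFrom_apply (a : ℕ → ℝ)
    (ha : ∀ n, a n = if Even n then exp ((n : ℝ) * (1 + 2 ^ n))
      else exp (-(((n : ℝ) + 1) * (1 + 2 ^ (n + 1)))))
    (A : ℕ → ℝ × ℝ →L[ℝ] ℝ × ℝ)
    (hA : ∀ n, A n = diagCLM ((exp 1)⁻¹ * a n) (exp 1)) (n k : ℕ) (x : ℝ × ℝ) :
    evolFrom A n k x = (exp (Gaux (n + k) - Gaux n - k) * x.1, exp k * x.2) := by
  induction k with
  | zero => simp [evolFrom]
  | succ k ih =>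
    rw [evolFrom, ContinuousLinearMap.comp_apply, ih, hA, a_succ a ha (n + k),
      diagCLM_apply]
    have h1 : (exp 1)⁻¹ * exp (Gaux (n + k + 1) - Gaux (n + k)) *
        exp (Gaux (n + k) - Gaux n - k) = exp (Gaux (n + k + 1) - Gaux n - (k + 1 : ℕ)) := by
      rw [← exp_neg, ← exp_add, ← exp_add]
      congr 1
      push_cast; ring
    have h2 : exp 1 * exp (k : ℕ) = exp ((k + 1 : ℕ)) := by
      rw [← exp_add]; congr 1; push_cast; ring
    rw [show n + (k + 1) = n + k + 1 from rfl]
    simp only [← h1, ← h2, Prod.mk.injEq]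
    constructor <;> ring

lemma key (a : ℕ → ℝ)
    (ha : ∀ n, a n = if Even n then exp ((n : ℝ) * (1 + 2 ^ n))
      else exp (-(((n : ℝ) + 1) * (1 + 2 ^ (n + 1)))))
    (A : ℕ → ℝ × ℝ →L[ℝ] ℝ × ℝ)
    (hA : ∀ n, A n = diagCLM ((exp 1)⁻¹ * a n) (exp 1)) :
    ∀ m n : ℕ, n ≤ m → ∀ x : ℝ × ℝ,
      exp (1 * ((m : ℝ) - n)) * (‖evolP A projFst m n x‖ + ‖(1 - projFst n) x‖) ≤
        exp (((n : ℝ) + 1) * (1 + 2 ^ (n + 1))) * ‖projFst n x‖ +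
          exp (((m : ℝ) + 1) * (1 + 2 ^ (m + 1))) * ‖evolQ A projFst m n x‖ := by
  intro m n hnm x
  have hm : n + (m - n) = m := Nat.add_sub_cancel' hnm
  have hc : ((m - n : ℕ) : ℝ) = (m : ℝ) - n := by
    push_cast [Nat.cast_sub hnm]; ring
  have hP : projFst n x = (x.1, 0) := by simp [projFst]
  have hQ : (1 - projFst n) x = (0, x.2) := by
    simp [projFst, ContinuousLinearMap.sub_apply, Prod.ext_iff]
  have hPev : evolP A projFst m n x = (exp (Gaux m - Gaux n - ((m : ℝ) - n)) * x.1, 0) := by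
    rw [evolP, ContinuousLinearMap.comp_apply, hP, evol,
      evolFrom_apply a ha A hA, hm, hc]
    simp
  have hQev : evolQ A projFst m n x = (0, exp ((m : ℝ) - n) * x.2) := by
    rw [evolQ, ContinuousLinearMap.comp_apply, hQ, evol,
      evolFrom_apply a ha A hA, hm, hc]
    simp
  rw [hPev, hQev, hQ, hP]
  have nP : ‖((exp (Gaux m - Gaux n - ((m : ℝ) - n)) * x.1 : ℝ), (0 : ℝ))‖
      = exp (Gaux m - Gaux n - ((m : ℝ) - n)) * |x.1| := by
    simp [Prod.norm_def, Real.norm_eq_abs, abs_mul, abs_exp]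
    positivity
  have nQ : ‖((0 : ℝ), x.2)‖ = |x.2| := by
    simp [Prod.norm_def, Real.norm_eq_abs]
  have nP0 : ‖((x.1 : ℝ), (0 : ℝ))‖ = |x.1| := by
    simp [Prod.norm_def, Real.norm_eq_abs]
  have nQev : ‖((0 : ℝ), exp ((m : ℝ) - n) * x.2)‖ = exp ((m : ℝ) - n) * |x.2| := by
    simp [Prod.norm_def, Real.norm_eq_abs, abs_mul, abs_exp]
    positivity
  rw [nP, nQ, nP0, nQev]
  have e1 : exp (1 * ((m : ℝ) - n)) * (exp (Gaux m - Gaux n - ((m : ℝ) - n)) * |x.1|)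
      = exp (Gaux m - Gaux n) * |x.1| := by
    rw [one_mul, ← mul_assoc, ← exp_add]
    ring_nf
  have h1 : exp (Gaux m - Gaux n) * |x.1| ≤
      exp (((n : ℝ) + 1) * (1 + 2 ^ (n + 1))) * |x.1| := by
    apply mul_le_mul_of_nonneg_right _ (abs_nonneg _)
    apply exp_le_exp.2
    have h2 := Gaux_nonpos m
    have h3 := neg_Gaux_le n
    linarith
  have h4 : exp (1 * ((m : ℝ) - n)) * |x.2| ≤
      exp (((m : ℝ) + 1) * (1 + 2 ^ (m + 1))) * (exp ((m : ℝ) - n) * |x.2|) := by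
    rw [one_mul]
    exact le_mul_of_one_le_left (by positivity) (one_le_exp (by positivity))
  calc exp (1 * ((m : ℝ) - n)) * (exp (Gaux m - Gaux n - ((m : ℝ) - n)) * |x.1| + |x.2|)
      = exp (Gaux m - Gaux n) * |x.1| + exp (1 * ((m : ℝ) - n)) * |x.2| := by
        rw [mul_add, e1]
    _ ≤ _ := add_le_add h1 h4

/-- Example: with `c = 1/e`, the system is P-nonuniformly exponentially
dichotomic, with `α = 1` and `N(n) = e^{(n+1)(1+2^{n+1})}`. -/
theorem example_nonuniform_exponential_dichotomy'
    (a : ℕ → ℝ)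
    (ha : ∀ n, a n = if Even n then exp ((n : ℝ) * (1 + 2 ^ n))
      else exp (-(((n : ℝ) + 1) * (1 + 2 ^ (n + 1)))))
    (A : ℕ → ℝ × ℝ →L[ℝ] ℝ × ℝ)
    (hA : ∀ n, A n = diagCLM ((exp 1)⁻¹ * a n) (exp 1)) :
    (∀ m n : ℕ, n ≤ m → ∀ x : ℝ × ℝ,
      exp (1 * ((m : ℝ) - n)) * (‖evolP A projFst m n x‖ + ‖(1 - projFst n) x‖) ≤
        exp (((n : ℝ) + 1) * (1 + 2 ^ (n + 1))) * ‖projFst n x‖ +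
          exp (((m : ℝ) + 1) * (1 + 2 ^ (m + 1))) * ‖evolQ A projFst m n x‖) ∧
    IsNED A projFst := by
  refine ⟨key a ha A hA, 1, one_pos,
    fun n => exp (((n : ℝ) + 1) * (1 + 2 ^ (n + 1))), fun n => exp_pos _, ?_, key a ha A hA⟩
  intro n m hnm
  apply exp_le_exp.2
  have h1 : ((n : ℝ) + 1) ≤ (m : ℝ) + 1 := by
    have : (n : ℝ) ≤ m := Nat.cast_le.2 hnm
    linarith
  have h2 : (1 + 2 ^ (n + 1) : ℝ) ≤ 1 + 2 ^ (m + 1) := by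
    have : (2 : ℝ) ^ (n + 1) ≤ 2 ^ (m + 1) :=
      pow_le_pow_right₀ one_le_two (by omega)
    linarith
  have h3 : (0 : ℝ) ≤ (n : ℝ) + 1 := by positivity
  have h4 : (0 : ℝ) ≤ 1 + 2 ^ (n + 1) := by positivity
  nlinarith
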